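/- For every n and K ⊆ [2, n+1], with τ_n(i) = n+3−i and J^max := J ∪ {n+2}: Σ_{J ⊆ [2,n+1]∖K} (−1)^{n−|K|−|J|} (α(J^max)!̂ − α(J)!̂) = Σ_{J ⊆ K} (−1)^{|K|−|J|} (|J|+1) α(τ_n(J))!̂. -/

import Mathlib

/-!
For `X = {x₁ < ⋯ < x_k} ⊆ [1, M+1]` the factor `(k+2-i)^(x_i - x_{i-1})` of `α(X)!̂` is the product
of `1 + #{x ∈ X | x > q}` over `q ∈ [x_{i-1}, x_i)`, so
`α(X)!̂ = ∏_{q=1}^{M} (1 + #{x ∈ X | x > q})`.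
In this form both sides are, up to sign, alternating sums `S_M(C) = ∑_{J ⊆ C} (-1)^|J| α(J)!̂`: the
left one for `C = ([2, n+1] \ K) ∪ {n+2}`, the right one for `C = τ_n(K) + 1`, the factor `|J| + 1`
being what shifting `J` up by one does to the product. These two sets are exchanged by
`C ↦ τ_M([2, M+1] \ C)` with `M = n+1`, and the theorem is the duality
`S_M(C) = (-1)^M S_M(τ_M([2, M+1] \ C))`, proved by induction on `M`.
If `M+1 ∉ C`, the top factor of the products in `S_M(C)` is `1`, while the dual set contains `2`,
which removing and shifting down turns into a sign; both sides drop to level `M-1`.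
If `M+1 ∈ C`, the identity `α(J ∪ {M+1})!̂ = 2 α(J)!̂ + ∑_{x=2}^{M} α(J ∪ {x})!̂` for `J ⊆ [2, M]`
writes `S_M(C)` through the sums `S_{M-1}(C' ∪ {x})`, `C' = C \ {M+1}`, and peeling the bottom
factor off the dual sum produces the duals of the same sums.
-/

open Finset

/-- Positions of descents of a permutation of `Fin (n+1)` in one-line notation. -/
def descSet (n : ℕ) (σ : Equiv.Perm (Fin (n+1))) : Finset (Fin n) :=
  Finset.univ.filter (fun i : Fin n => σ i.succ < σ i.castSucc)

/-- Number of descents. -/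
def des (n : ℕ) (σ : Equiv.Perm (Fin (n+1))) : ℕ := (descSet n σ).card

/-- Descent top set, with values written 1-based (so `DT n σ ⊆ [2, n+1]`). -/
def DT (n : ℕ) (σ : Equiv.Perm (Fin (n+1))) : Finset ℕ :=
  (descSet n σ).image (fun i => (σ i.castSucc : ℕ) + 1)

/-- `β!̂ = (k+1)^{β₁} k^{β₂} ⋯ 2^{β_k}` for a tuple `β` of length `k`. -/
def hatFac (β : List ℕ) : ℕ :=
  (β.zipIdx.map (fun p => (β.length + 1 - p.2) ^ p.1)).prod

/-- `α(X)!̂` where, for `X = {x₁ < … < x_k}`, `α(X) = (x₁ - 1, x₂ - x₁, …, x_k - x_{k-1})`. -/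
def alphaHat (X : Finset ℕ) : ℕ :=
  hatFac (List.zipWith (fun a b => b - a) (1 :: X.sort (· ≤ ·)) (X.sort (· ≤ ·)))

namespace Finset

variable {α β R : Type*}

theorem sum_powerset_neg_one_pow_card_mul_insert_of_mem [DecidableEq α] [CommRing R]
    {s : Finset α} {a : α} (ha : a ∈ s) (f : Finset α → R) :
    ∑ t ∈ s.powerset, (-1) ^ #t * f (insert a t) = 0 := by
  rw [← insert_erase ha, sum_powerset_insert (notMem_erase a s), ← sum_add_distrib]
  refine sum_eq_zero fun t ht => ?_
  have hat : a ∉ t := fun h => notMem_erase a s (mem_powerset.mp ht h)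
  rw [insert_idem, card_insert_of_notMem hat, pow_succ]
  ring

theorem sum_powerset_image [DecidableEq β] [AddCommMonoid R] {s : Finset α} {f : α → β}
    (hf : Set.InjOn f s) (g : Finset β → R) :
    ∑ t ∈ (s.image f).powerset, g t = ∑ t ∈ s.powerset, g (t.image f) := by
  rw [powerset_image, sum_image fun t ht u hu htu => ?_]
  rw [← coe_inj, ← hf.image_eq_image_iff (coe_subset.mpr (mem_powerset.mp ht))
    (coe_subset.mpr (mem_powerset.mp hu)), ← coe_image, ← coe_image, htu]

theorem sum_sum_powerset_erase [DecidableEq α] [AddCommMonoid R] (s : Finset α)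
    (f : α → Finset α → R) :
    ∑ a ∈ s, ∑ t ∈ (s.erase a).powerset, f a t = ∑ t ∈ s.powerset, ∑ a ∈ s \ t, f a t :=
  sum_comm' fun a t => by
    simp only [mem_powerset, mem_sdiff, subset_erase]
    tauto

theorem sum_Icc_two_sdiff [AddCommMonoid β] (J : Finset ℕ) (M : ℕ) (f : ℕ → β) :
    ∑ x ∈ Icc 2 (M + 1) \ J, f x = ∑ p ∈ range M with p + 2 ∉ J, f (p + 2) := by
  refine sum_nbij' (· - 2) (· + 2) (fun x hx => ?_) (fun p hp => ?_) (fun x hx => ?_)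
    (fun p _ => rfl) (fun x hx => ?_)
  · rw [mem_sdiff, mem_Icc] at hx
    exact mem_filter.mpr ⟨mem_range.mpr (by omega), by rw [show x - 2 + 2 = x by omega]; exact hx.2⟩
  · rw [mem_filter, mem_range] at hp
    exact mem_sdiff.mpr ⟨mem_Icc.mpr ⟨by omega, by omega⟩, hp.2⟩
  · have := (mem_Icc.mp (mem_sdiff.mp hx).1).1
    omega
  · have := (mem_Icc.mp (mem_sdiff.mp hx).1).1
    rw [show x - 2 + 2 = x by omega]

end Finset

lemma neg_one_pow_sub {R : Type*} [CommRing R] {a b : ℕ} (h : b ≤ a) :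
    (-1 : R) ^ (a - b) = (-1) ^ a * (-1) ^ b := by
  obtain ⟨k, rfl⟩ := Nat.exists_eq_add_of_le h
  rw [Nat.add_sub_cancel_left, pow_add, mul_right_comm, ← pow_add, ← two_mul, pow_mul, neg_one_sq,
    one_pow, one_mul]

-- This is `hatProd_insert_top` for `c i = #{x ∈ J | i + 1 < x} + 1`, which drops by one from `i`
-- to `i + 1` exactly when `i + 2 ∈ J`.
lemma two_mul_prod_add_one_eq (c : ℕ → ℕ) (M : ℕ) (htop : c M = 1)
    (hstep : ∀ i < M, c i = c (i + 1) ∨ c i = c (i + 1) + 1) :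
    2 * ∏ i ∈ range M, (c i + 1) = (c 0 + 1) * ∏ i ∈ range M, c i +
      ∑ p ∈ range M with c p = c (p + 1), ∏ i ∈ range M, (c i + if i ≤ p then 1 else 0) := by
  induction M generalizing c with
  | zero => simp [htop]
  | succ M ih =>
    have key := ih (fun i => c (i + 1)) htop fun i hi => hstep (i + 1) (by omega)
    rw [sum_filter] at key ⊢
    rw [prod_range_succ', prod_range_succ', sum_range_succ']
    simp only [prod_range_succ', add_le_add_iff_right, zero_le, if_true, ← ite_zero_mul,
      Nat.le_zero, Nat.add_one_ne_zero, if_false, add_zero, zero_add,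
      ← sum_mul] at key ⊢
    rcases hstep 0 (by omega) with h | h <;> rw [zero_add] at h
    · rw [if_pos h, h]
      linear_combination (c 1 + 1) * key
    · rw [if_neg (by omega), h]
      linear_combination (c 1 + 2) * key

def hatProd (J : Finset ℕ) (M : ℕ) : ℕ := ∏ i ∈ range M, (#{x ∈ J | i + 1 < x} + 1)

lemma hatFac_cons (b : ℕ) (β : List ℕ) : hatFac (b :: β) = (β.length + 2) ^ b * hatFac β := by
  simp only [hatFac, List.zipIdx_cons, List.zipIdx_succ, List.map_cons, List.map_map,
    List.prod_cons, List.length_cons]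
  congr 2
  refine List.map_congr_left fun p _ => ?_
  simp only [Function.comp_apply]
  congr 1
  omega

lemma hatFac_zipWith_sub {L : List ℕ} (hL : L.Pairwise (· < ·)) {c m : ℕ}
    (hbound : ∀ x ∈ L, c ≤ x ∧ x ≤ c + m) :
    hatFac (List.zipWith (fun a b => b - a) (c :: L) L) =
      ∏ i ∈ range m, (L.countP (fun x => c + i < x) + 1) := by
  induction L generalizing c m with
  | nil => simp [hatFac]
  | cons x L ih =>
    obtain ⟨hxL, hL⟩ := List.pairwise_cons.mp hL
    obtain ⟨hcx, hxm⟩ := hbound x List.mem_cons_self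
    rw [List.zipWith_cons_cons, hatFac_cons, List.length_zipWith, List.length_cons,
      min_eq_right (Nat.le_succ _), ih hL (m := c + m - x) fun y hy =>
        ⟨(hxL y hy).le, by have := (hbound y (List.mem_cons_of_mem x hy)).2; omega⟩,
      show range m = range ((x - c) + (c + m - x)) by congr 1; omega, prod_range_add]
    congr 1
    · have hall : ∀ i ∈ range (x - c), (x :: L).countP (fun y => c + i < y) + 1 = L.length + 2 :=
        fun i hi => by
          rw [List.countP_eq_length.mpr fun y hy => ?_, List.length_cons]
          have := mem_range.mp hi
          rcases List.mem_cons.mp hy with rfl | hy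
          · simp only [decide_eq_true_eq]; omega
          · have := hxL y hy; simp only [decide_eq_true_eq]; omega
      rw [prod_congr rfl hall, prod_const, card_range]
    · refine prod_congr rfl fun k _ => ?_
      rw [show c + (x - c + k) = x + k by omega, List.countP_cons, if_neg (by simp)]

lemma alphaHat_eq_hatProd {X : Finset ℕ} {M : ℕ} (hX : X ⊆ Icc 1 (M + 1)) :
    alphaHat X = hatProd X M := by
  rw [alphaHat, hatFac_zipWith_sub (sortedLT_sort X).pairwise (m := M) fun x hx => by
    have := mem_Icc.mp (hX ((mem_sort _).mp hx)); omega]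
  refine prod_congr rfl fun i _ => ?_
  rw [(sort_perm_toList X (· ≤ ·)).countP_eq, ← Multiset.coe_countP, coe_toList,
    Multiset.countP_eq_card_filter, add_comm 1 i]
  rfl

lemma hatProd_succ_of_forall_le {J : Finset ℕ} {M : ℕ} (hJ : ∀ x ∈ J, x ≤ M + 1) :
    hatProd J (M + 1) = hatProd J M := by
  rw [hatProd, prod_range_succ, filter_false_of_mem fun x hx => by have := hJ x hx; omega,
    card_empty, zero_add, mul_one, hatProd]

lemma hatProd_image_succ (J : Finset ℕ) (M : ℕ) :
    hatProd (J.image (· + 1)) (M + 1) = (#{x ∈ J | 0 < x} + 1) * hatProd J M := by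
  simp only [hatProd, prod_range_succ', filter_image,
    card_image_of_injective _ (add_left_injective (1 : ℕ)), add_lt_add_iff_right]
  rw [mul_comm]

lemma hatProd_insert_one (J : Finset ℕ) (M : ℕ) : hatProd (insert 1 J) M = hatProd J M := by
  refine prod_congr rfl fun i _ => ?_
  rw [filter_insert, if_neg (by omega)]

lemma card_filter_lt_insert {J : Finset ℕ} {x : ℕ} (hx : x ∉ J) (q : ℕ) :
    #{y ∈ insert x J | q < y} = #{y ∈ J | q < y} + if q < x then 1 else 0 := by
  rw [filter_insert]
  split_ifs
  · exact card_insert_of_notMem fun h => hx (mem_filter.mp h).1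
  · rfl

lemma card_filter_lt_eq_succ_add (J : Finset ℕ) (q : ℕ) :
    #{y ∈ J | q < y} = #{y ∈ J | q + 1 < y} + if q + 1 ∈ J then 1 else 0 := by
  rw [← card_filter_add_card_filter_not (p := fun y => q + 1 < y), filter_filter, filter_filter]
  congr 1
  · exact congrArg card (filter_congr fun y _ => by omega)
  · rw [filter_congr (q := (· = q + 1)) fun y _ => by omega, filter_eq']
    split_ifs <;> rfl

lemma hatProd_insert_of_notMem {J : Finset ℕ} {x : ℕ} (hx : x ∉ J) (M : ℕ) :
    hatProd (insert x J) M =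
      ∏ i ∈ range M, (#{y ∈ J | i + 1 < y} + 1 + if i + 1 < x then 1 else 0) :=
  prod_congr rfl fun i _ => by rw [card_filter_lt_insert hx]; ring

lemma hatProd_insert_top {J : Finset ℕ} {M : ℕ} (hJ : J ⊆ Icc 2 (M + 1)) :
    hatProd (insert (M + 2) J) (M + 1) =
      2 * hatProd J M + ∑ x ∈ Icc 2 (M + 1), hatProd (insert x J) M := by
  have hmem : ∀ x ∈ J, 2 ≤ x ∧ x ≤ M + 1 := fun x hx => mem_Icc.mp (hJ hx)
  obtain ⟨c, hc⟩ : ∃ c : ℕ → ℕ, ∀ i, #{x ∈ J | i + 1 < x} + 1 = c i := ⟨_, fun _ => rfl⟩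
  have hP : hatProd J M = ∏ i ∈ range M, c i := prod_congr rfl fun i _ => hc i
  have hstep : ∀ i, c i = c (i + 1) + if i + 2 ∈ J then 1 else 0 := fun i => by
    rw [← hc, ← hc, card_filter_lt_eq_succ_add J (i + 1)]
    ring
  have hiff : ∀ p, p + 2 ∉ J ↔ c p = c (p + 1) := fun p => by
    rw [hstep p]
    split_ifs with h <;> simp [h]
  have hc0 : c 0 = #J + 1 := by
    rw [← hc, filter_true_of_mem fun x hx => by have := hmem x hx; omega]
  have hcM : c M = 1 := by
    rw [← hc, filter_false_of_mem fun x hx => by have := hmem x hx; omega, card_empty]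
  have hsdiff : ∑ x ∈ Icc 2 (M + 1) \ J, hatProd (insert x J) M =
      ∑ p ∈ range M with c p = c (p + 1), ∏ i ∈ range M, (c i + if i ≤ p then 1 else 0) := by
    rw [sum_Icc_two_sdiff, filter_congr fun p _ => hiff p]
    refine sum_congr rfl fun p hp => ?_
    rw [hatProd_insert_of_notMem ((hiff p).mpr (mem_filter.mp hp).2)]
    simp only [hc, add_lt_add_iff_right, Nat.lt_succ_iff]
  have hJsum : ∑ x ∈ J, hatProd (insert x J) M = #J * hatProd J M := by
    rw [sum_congr rfl fun x hx => by rw [insert_eq_of_mem hx], sum_const, smul_eq_mul]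
  rw [hatProd_insert_of_notMem (fun h => by have := hmem _ h; omega),
    ← sum_sdiff hJ (f := fun x => hatProd (insert x J) M), hsdiff, hJsum, hP]
  simp only [hc]
  rw [prod_range_succ,
    prod_congr rfl fun i hi => by rw [if_pos (by have := mem_range.mp hi; omega)],
    if_pos (by omega), hcM, mul_comm,
    two_mul_prod_add_one_eq c M hcM fun i _ => by rw [hstep i]; split_ifs <;> simp, hc0]
  ring

def altSum (C : Finset ℕ) (M : ℕ) : ℤ := ∑ J ∈ C.powerset, (-1) ^ #J * (hatProd J M : ℤ)

lemma sum_powerset_hatProd_insert {C : Finset ℕ} {a : ℕ} (ha : a ∉ C) (M : ℕ) :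
    ∑ J ∈ C.powerset, (-1) ^ #J * (hatProd (insert a J) M : ℤ) =
      altSum C M - altSum (insert a C) M := by
  rw [altSum, altSum, sum_powerset_insert ha, sub_add_cancel_left, ← sum_neg_distrib]
  refine sum_congr rfl fun J hJ => ?_
  rw [card_insert_of_notMem fun h => ha (mem_powerset.mp hJ h), pow_succ]
  ring

lemma altSum_succ_of_forall_le {C : Finset ℕ} {M : ℕ} (hC : ∀ x ∈ C, x ≤ M + 1) :
    altSum C (M + 1) = altSum C M :=
  sum_congr rfl fun J hJ => by
    rw [hatProd_succ_of_forall_le fun x hx => hC x (mem_powerset.mp hJ hx)]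

lemma altSum_image_succ {E : Finset ℕ} (hE : 0 ∉ E) (M : ℕ) :
    altSum (E.image (· + 1)) (M + 1) =
      ∑ J ∈ E.powerset, (-1) ^ #J * (#J + 1) * (hatProd J M : ℤ) := by
  rw [altSum, sum_powerset_image (add_left_injective 1).injOn]
  refine sum_congr rfl fun J hJ => ?_
  rw [card_image_of_injective _ (add_left_injective 1), hatProd_image_succ,
    filter_true_of_mem fun x hx => Nat.pos_of_ne_zero fun h => hE (h ▸ mem_powerset.mp hJ hx)]
  push_cast
  ring

lemma altSum_insert_two_image_succ {E : Finset ℕ} (h0 : 0 ∉ E) (h1 : 1 ∉ E) (M : ℕ) :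
    altSum (insert 2 (E.image (· + 1))) (M + 1) = -altSum E M := by
  rw [show insert 2 (E.image (· + 1)) = (insert 1 E).image (· + 1) by rw [image_insert],
    altSum_image_succ (by simpa using h0), sum_powerset_insert h1, altSum, ← sum_add_distrib,
    ← sum_neg_distrib]
  refine sum_congr rfl fun J hJ => ?_
  rw [hatProd_insert_one, card_insert_of_notMem fun h => h1 (mem_powerset.mp hJ h)]
  push_cast
  ring

lemma altSum_image_succ_eq_sub {E : Finset ℕ} (hE : 0 ∉ E) (M : ℕ) :
    altSum (E.image (· + 1)) (M + 1) = (#E + 1) * altSum E M - ∑ e ∈ E, altSum (E.erase e) M := by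
  rw [altSum_image_succ hE]
  simp only [altSum, mul_sum, sum_sum_powerset_erase, sum_const,
    ← sum_sub_distrib]
  refine sum_congr rfl fun J hJ => ?_
  rw [card_sdiff_of_subset (mem_powerset.mp hJ), nsmul_eq_mul,
    Nat.cast_sub (card_le_card (mem_powerset.mp hJ))]
  ring

lemma altSum_insert_top {C : Finset ℕ} {M : ℕ} (hC : C ⊆ Icc 2 (M + 1)) :
    altSum (insert (M + 2) C) (M + 1) =
      ∑ x ∈ Icc 2 (M + 1) \ C, altSum (insert x C) M - (#(Icc 2 (M + 1) \ C) + 1) * altSum C M := by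
  have hM : M + 2 ∉ C := fun h => by have := mem_Icc.mp (hC h); omega
  calc altSum (insert (M + 2) C) (M + 1)
      = altSum C M - ∑ J ∈ C.powerset, (-1) ^ #J * (hatProd (insert (M + 2) J) (M + 1) : ℤ) := by
        rw [sum_powerset_hatProd_insert hM,
          altSum_succ_of_forall_le fun x hx => (mem_Icc.mp (hC hx)).2]
        ring
    _ = altSum C M - (2 * altSum C M +
          ∑ x ∈ Icc 2 (M + 1), ∑ J ∈ C.powerset, (-1) ^ #J * (hatProd (insert x J) M : ℤ)) := by
        rw [sum_comm, altSum, mul_sum, ← sum_add_distrib]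
        refine congrArg _ (sum_congr rfl fun J hJ => ?_)
        rw [hatProd_insert_top ((mem_powerset.mp hJ).trans hC)]
        push_cast
        rw [mul_add, mul_sum, mul_left_comm]
    _ = _ := by
        rw [← sum_sdiff hC, sum_eq_zero fun x hx =>
            sum_powerset_neg_one_pow_card_mul_insert_of_mem hx fun J => (hatProd J M : ℤ),
          add_zero, sum_congr rfl fun x hx => sum_powerset_hatProd_insert (mem_sdiff.mp hx).2 M,
          sum_sub_distrib, sum_const, nsmul_eq_mul]
        ring

def reflCompl (M : ℕ) (C : Finset ℕ) : Finset ℕ := (Icc 2 (M + 1) \ C).image (M + 3 - ·)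

lemma injOn_reflect (M : ℕ) : Set.InjOn (M + 3 - ·) ↑(Icc 2 (M + 1)) := fun x hx y hy h => by
  simp only [coe_Icc, Set.mem_Icc] at hx hy h
  omega

lemma reflCompl_subset (M : ℕ) (C : Finset ℕ) : reflCompl M C ⊆ Icc 2 (M + 1) := by
  intro y
  simp only [reflCompl, mem_image, mem_sdiff, mem_Icc]
  omega

lemma card_reflCompl (M : ℕ) (C : Finset ℕ) : #(reflCompl M C) = #(Icc 2 (M + 1) \ C) :=
  card_image_of_injOn ((injOn_reflect M).mono (coe_subset.mpr sdiff_subset))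

lemma sum_reflCompl (M : ℕ) (C : Finset ℕ) {β : Type*} [AddCommMonoid β] (f : ℕ → β) :
    ∑ e ∈ reflCompl M C, f e = ∑ x ∈ Icc 2 (M + 1) \ C, f (M + 3 - x) :=
  sum_image ((injOn_reflect M).mono (coe_subset.mpr sdiff_subset))

lemma reflCompl_succ {M : ℕ} {C : Finset ℕ} (hC : ∀ x ∈ C, x ≤ M + 1) :
    reflCompl (M + 1) C = insert 2 ((reflCompl M C).image (· + 1)) := by
  ext y
  simp only [reflCompl, mem_image, mem_sdiff, mem_Icc, mem_insert]
  constructor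
  · rintro ⟨z, ⟨hz, hzC⟩, rfl⟩
    by_cases hzM : z = M + 2
    · exact Or.inl (by omega)
    · exact Or.inr ⟨M + 3 - z, ⟨z, ⟨⟨hz.1, by omega⟩, hzC⟩, rfl⟩, by omega⟩
  · rintro (rfl | ⟨_, ⟨z, ⟨hz, hzC⟩, rfl⟩, rfl⟩)
    · exact ⟨M + 2, ⟨⟨by omega, le_rfl⟩, fun h => by have := hC _ h; omega⟩, by omega⟩
    · exact ⟨z, ⟨⟨hz.1, by omega⟩, hzC⟩, by omega⟩

lemma reflCompl_succ_insert (M : ℕ) (C : Finset ℕ) :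
    reflCompl (M + 1) (insert (M + 2) C) = (reflCompl M C).image (· + 1) := by
  ext y
  simp only [reflCompl, mem_image, mem_sdiff, mem_Icc, mem_insert, not_or]
  constructor
  · rintro ⟨z, ⟨hz, hzM, hzC⟩, rfl⟩
    exact ⟨M + 3 - z, ⟨z, ⟨⟨hz.1, by omega⟩, hzC⟩, rfl⟩, by omega⟩
  · rintro ⟨_, ⟨z, ⟨hz, hzC⟩, rfl⟩, rfl⟩
    exact ⟨z, ⟨⟨hz.1, by omega⟩, by omega, hzC⟩, by omega⟩

lemma reflCompl_insert {M x : ℕ} {C : Finset ℕ} (hx : x ∈ Icc 2 (M + 1)) :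
    reflCompl M (insert x C) = (reflCompl M C).erase (M + 3 - x) := by
  rw [mem_Icc] at hx
  ext y
  simp only [reflCompl, mem_image, mem_sdiff, mem_Icc, mem_insert, mem_erase, not_or]
  constructor
  · rintro ⟨z, ⟨hz, hzx, hzC⟩, rfl⟩
    exact ⟨by omega, z, ⟨hz, hzC⟩, rfl⟩
  · rintro ⟨hy, z, ⟨hz, hzC⟩, rfl⟩
    exact ⟨z, ⟨hz, fun h => hy (h ▸ rfl), hzC⟩, rfl⟩

theorem altSum_eq_neg_one_pow_mul_altSum_reflCompl (M : ℕ) {C : Finset ℕ} (hC : C ⊆ Icc 2 (M + 1)) :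
    altSum C M = (-1) ^ M * altSum (reflCompl M C) M := by
  induction M generalizing C with
  | zero =>
    obtain rfl : C = ∅ := subset_empty.mp (hC.trans (Icc_eq_empty (by norm_num)).subset)
    simp [altSum, reflCompl]
  | succ M ih =>
    have hsmall : ∀ {a D}, a < 2 → a ∉ reflCompl M D := fun ha h => by
      have := mem_Icc.mp (reflCompl_subset M _ h); omega
    by_cases hM : M + 2 ∈ C
    · obtain ⟨C₀, hC₀, rfl⟩ : ∃ C₀ ⊆ Icc 2 (M + 1), C = insert (M + 2) C₀ := by
        refine ⟨C.erase (M + 2), fun x hx => ?_, (insert_erase hM).symm⟩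
        have := mem_Icc.mp (hC (mem_of_mem_erase hx))
        exact mem_Icc.mpr ⟨this.1, by have := ne_of_mem_erase hx; omega⟩
      rw [reflCompl_succ_insert, altSum_image_succ_eq_sub (hsmall (by norm_num)),
        altSum_insert_top hC₀, ih hC₀, card_reflCompl, sum_reflCompl,
        sum_congr rfl fun x hx => by
          rw [ih (insert_subset (mem_sdiff.mp hx).1 hC₀), reflCompl_insert (mem_sdiff.mp hx).1],
        ← mul_sum, pow_succ]
      ring
    · have hC' : C ⊆ Icc 2 (M + 1) := fun x hx => by
        have := mem_Icc.mp (hC hx)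
        exact mem_Icc.mpr ⟨this.1, by have : x ≠ M + 2 := fun h => hM (h ▸ hx); omega⟩
      have hle : ∀ x ∈ C, x ≤ M + 1 := fun x hx => (mem_Icc.mp (hC' hx)).2
      rw [altSum_succ_of_forall_le hle, ih hC', reflCompl_succ hle,
        altSum_insert_two_image_succ (hsmall (by norm_num)) (hsmall (by norm_num)), pow_succ]
      ring

lemma sum_powerset_alphaHat_insert_sub {A : Finset ℕ} {n : ℕ} (hA : A ⊆ Icc 2 (n + 1)) :
    ∑ J ∈ A.powerset, (-1 : ℤ) ^ (#A - #J) * ((alphaHat (insert (n + 2) J) : ℤ) - alphaHat J) =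
      -((-1) ^ #A * altSum (insert (n + 2) A) (n + 1)) := by
  have hM : n + 2 ∉ A := fun h => by have := mem_Icc.mp (hA h); omega
  calc _ = (-1) ^ #A * (∑ J ∈ A.powerset, (-1) ^ #J * (hatProd (insert (n + 2) J) (n + 1) : ℤ) -
        altSum A (n + 1)) := by
        rw [altSum, ← sum_sub_distrib, mul_sum]
        refine sum_congr rfl fun J hJ => ?_
        have hJ := mem_powerset.mp hJ
        have hJ' : insert (n + 2) J ⊆ Icc 1 (n + 1 + 1) := insert_subset (by simp) fun x hx => by
          have := mem_Icc.mp (hA (hJ hx))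
          exact mem_Icc.mpr ⟨by omega, by omega⟩
        rw [neg_one_pow_sub (card_le_card hJ), alphaHat_eq_hatProd hJ',
          alphaHat_eq_hatProd ((subset_insert _ _).trans hJ')]
        ring
    _ = _ := by rw [sum_powerset_hatProd_insert hM]; ring

lemma sum_powerset_alphaHat_image_reflect {K : Finset ℕ} {n : ℕ} (hK : K ⊆ Icc 2 (n + 1)) :
    ∑ J ∈ K.powerset, (-1 : ℤ) ^ (#K - #J) * (#J + 1) * alphaHat (J.image (n + 3 - ·)) =
      (-1) ^ #K * altSum ((K.image (n + 3 - ·)).image (· + 1)) (n + 1) := by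
  have hτ : Set.InjOn (n + 3 - ·) ↑K := (injOn_reflect n).mono (coe_subset.mpr hK)
  rw [altSum_image_succ fun h => by
      obtain ⟨j, hj, hj0⟩ := mem_image.mp h
      have := mem_Icc.mp (hK hj)
      omega,
    sum_powerset_image hτ, mul_sum]
  refine sum_congr rfl fun J hJ => ?_
  have hJ := mem_powerset.mp hJ
  have hτJ : J.image (n + 3 - ·) ⊆ Icc 1 (n + 1) := fun y hy => by
    obtain ⟨j, hj, rfl⟩ := mem_image.mp hy
    have := mem_Icc.mp (hK (hJ hj))
    exact mem_Icc.mpr ⟨by omega, by omega⟩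
  rw [card_image_of_injOn (hτ.mono (coe_subset.mpr hJ)), alphaHat_eq_hatProd hτJ,
    neg_one_pow_sub (card_le_card hJ)]
  ring

/-- Sequential combinatorial sums, with `τ_n(i) = n+3-i` and `J^max = J ∪ {n+2}`. -/
theorem sequential_sums (n : ℕ) (K : Finset ℕ) (hK : K ⊆ Finset.Icc 2 (n+1)) :
    ∑ J ∈ (Finset.Icc 2 (n+1) \ K).powerset,
        (-1 : ℤ) ^ (n - K.card - J.card) *
          ((alphaHat (insert (n+2) J) : ℤ) - (alphaHat J : ℤ)) =
      ∑ J ∈ K.powerset,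
        (-1 : ℤ) ^ (K.card - J.card) * (J.card + 1) *
          alphaHat (J.image (fun j => n + 3 - j)) := by
  set A := Icc 2 (n + 1) \ K
  have hA : A ⊆ Icc 2 (n + 1) := sdiff_subset
  have hKn : #K ≤ n := by simpa using card_le_card hK
  have hcard : n - #K = #A := by rw [card_sdiff_of_subset hK, Nat.card_Icc]; rfl
  have hinsert : insert (n + 2) A ⊆ Icc 2 (n + 1 + 1) :=
    insert_subset (mem_Icc.mpr ⟨by omega, le_rfl⟩) (hA.trans (Icc_subset_Icc le_rfl (by omega)))
  have hrefl : reflCompl (n + 1) (insert (n + 2) A) = (K.image (n + 3 - ·)).image (· + 1) := by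
    rw [reflCompl_succ_insert, reflCompl, Finset.sdiff_sdiff_eq_self hK]
  rw [hcard, sum_powerset_alphaHat_insert_sub hA, sum_powerset_alphaHat_image_reflect hK, ← hrefl,
    altSum_eq_neg_one_pow_mul_altSum_reflCompl (n + 1) hinsert, ← hcard, neg_one_pow_sub hKn,
    pow_succ]
  rcases neg_one_pow_eq_or ℤ n with h | h <;> rw [h] <;> ring
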